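/- (Sym-Tafel-type surface in the second variable.) Let u¹, u² : ℝ² → M_n(ℝ) be continuously differentiable and satisfy the zero-curvature condition ∂₂u¹ − ∂₁u² + [u¹, u²] = 0 everywhere, let Ψ : ℝ² → M_n(ℝ) be twice continuously differentiable with Ψ(ξ) invertible for every ξ and solving the linear spectral problem for (u¹, u²), and let s : ℝ → ℝ be continuously differentiable. Then the surface F^s := s(ξ₂)·Ψ⁻¹·(∂₂Ψ) has partial derivatives ∂₁F^s = s(ξ₂)·Ψ⁻¹·(∂₂u¹)·Ψ and ∂₂F^s = Ψ⁻¹·∂₂(s(ξ₂)u²)·Ψ at every point of ℝ². -/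

import Mathlib

/-!
Since `∂₂Ψ = u²Ψ`, the surface is the conjugate `F^s = Ψ⁻¹ (s u²) Ψ`. Differentiating a conjugate
`Ψ⁻¹ A Ψ` in a direction along which `∂Ψ = UΨ` gives `Ψ⁻¹ (∂A + [A, U]) Ψ`. In the `ξ₂` direction
the commutator `[s u², u²]` vanishes; in the `ξ₁` direction `s` is constant and
`∂₁u² + [u², u¹] = ∂₂u¹` is the zero-curvature condition.
-/

open Matrix

attribute [local instance] Matrix.normedAddCommGroup Matrix.normedSpace

/-- Partial derivative in the first variable `ξ₁` of a matrix-valued map on `ℝ²`. -/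
noncomputable def pd1 {n : ℕ} (f : ℝ × ℝ → Matrix (Fin n) (Fin n) ℝ) (p : ℝ × ℝ) :
    Matrix (Fin n) (Fin n) ℝ :=
  fderiv ℝ f p (1, 0)

/-- Partial derivative in the second variable `ξ₂` of a matrix-valued map on `ℝ²`. -/
noncomputable def pd2 {n : ℕ} (f : ℝ × ℝ → Matrix (Fin n) (Fin n) ℝ) (p : ℝ × ℝ) :
    Matrix (Fin n) (Fin n) ℝ :=
  fderiv ℝ f p (0, 1)

section MatrixCalculus

/- The sup norm on matrices is not submultiplicative; the product and inverse rules are obtained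
from the `L∞` operator norm, which induces the same topology. -/

variable {𝕜 E m : Type*} [NontriviallyNormedField 𝕜] [NormedAddCommGroup E] [NormedSpace 𝕜 E]
  [Fintype m] [DecidableEq m] {f g : E → Matrix m m 𝕜} {x : E}

theorem fderiv_matrix_mul_apply (hf : DifferentiableAt 𝕜 f x) (hg : DifferentiableAt 𝕜 g x)
    (v : E) :
    fderiv 𝕜 (fun y => f y * g y) x v = fderiv 𝕜 f x v * g x + f x * fderiv 𝕜 g x v := by
  open scoped Matrix.Norms.Operator in
    exact (DFunLike.congr_fun (fderiv_fun_mul' hf hg) v).trans (add_comm _ _)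

theorem DifferentiableAt.matrix_mul (hf : DifferentiableAt 𝕜 f x) (hg : DifferentiableAt 𝕜 g x) :
    DifferentiableAt 𝕜 (fun y => f y * g y) x := by
  open scoped Matrix.Norms.Operator in exact hf.mul hg

variable [CompleteSpace 𝕜]

theorem DifferentiableAt.matrix_inv (hf : DifferentiableAt 𝕜 f x) (hx : IsUnit (f x)) :
    DifferentiableAt 𝕜 (fun y => (f y)⁻¹) x := by
  let R : NormedRing (Matrix m m 𝕜) := Matrix.linftyOpNormedRing
  let _ : NormedAlgebra 𝕜 (Matrix m m 𝕜) := Matrix.linftyOpNormedAlgebra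
  have : @CompleteSpace _ R.toUniformSpace := FiniteDimensional.complete 𝕜 _
  simp_rw [nonsing_inv_eq_ringInverse]
  exact hf.inverse hx

theorem fderiv_matrix_inv_apply (hf : DifferentiableAt 𝕜 f x) (hx : IsUnit (f x)) (v : E) :
    fderiv 𝕜 (fun y => (f y)⁻¹) x v = -((f x)⁻¹ * fderiv 𝕜 f x v * (f x)⁻¹) := by
  let R : NormedRing (Matrix m m 𝕜) := Matrix.linftyOpNormedRing
  let _ : NormedAlgebra 𝕜 (Matrix m m 𝕜) := Matrix.linftyOpNormedAlgebra
  have : @CompleteSpace _ R.toUniformSpace := FiniteDimensional.complete 𝕜 _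
  obtain ⟨u, hu⟩ := hx
  have hinv := hasFDerivAt_ringInverse (𝕜 := 𝕜) u
  rw [hu] at hinv
  have h := hinv.comp x hf.hasFDerivAt
  simp_rw [nonsing_inv_eq_ringInverse]
  refine (DFunLike.congr_fun h.fderiv v).trans ?_
  rw [← hu, Ring.inverse_unit]
  rfl

theorem fderiv_matrix_conj_apply {Ψ A : E → Matrix m m 𝕜} {U : Matrix m m 𝕜} {v : E}
    (hΨ : DifferentiableAt 𝕜 Ψ x) (hA : DifferentiableAt 𝕜 A x) (hx : IsUnit (Ψ x))
    (hΨv : fderiv 𝕜 Ψ x v = U * Ψ x) :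
    fderiv 𝕜 (fun y => (Ψ y)⁻¹ * A y * Ψ y) x v
      = (Ψ x)⁻¹ * (fderiv 𝕜 A x v + (A x * U - U * A x)) * Ψ x := by
  have hΨinv := hΨ.matrix_inv hx
  rw [fderiv_matrix_mul_apply (hΨinv.matrix_mul hA) hΨ, fderiv_matrix_mul_apply hΨinv hA,
    fderiv_matrix_inv_apply hΨ hx, hΨv]
  have hcancel : (Ψ x)⁻¹ * (U * Ψ x) * (Ψ x)⁻¹ = (Ψ x)⁻¹ * U := by
    rw [mul_assoc, mul_assoc, mul_nonsing_inv _ ((isUnit_iff_isUnit_det _).1 hx), mul_one]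
  rw [hcancel]
  noncomm_ring

end MatrixCalculus

theorem fderiv_smul_comp_snd_apply_of_snd_eq_zero {𝕜 E F G : Type*} [NontriviallyNormedField 𝕜]
    [NormedAddCommGroup E] [NormedSpace 𝕜 E] [NormedAddCommGroup F] [NormedSpace 𝕜 F]
    [NormedAddCommGroup G] [NormedSpace 𝕜 G] {c : F → 𝕜} {f : E × F → G} {p : E × F}
    {v : E × F} (hc : DifferentiableAt 𝕜 c p.2) (hf : DifferentiableAt 𝕜 f p) (hv : v.2 = 0) :
    fderiv 𝕜 (fun q => c q.2 • f q) p v = c p.2 • fderiv 𝕜 f p v := by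
  have hcs : HasFDerivAt (fun q : E × F => c q.2)
      ((fderiv 𝕜 c p.2).comp (ContinuousLinearMap.snd 𝕜 E F)) p :=
    hc.hasFDerivAt.comp p hasFDerivAt_snd
  rw [(hcs.fun_smul hf.hasFDerivAt).fderiv]
  simp [hv]

theorem surface_Fs_tangent_vectors_general {n : ℕ}
    (u1 u2 Ψ : ℝ × ℝ → Matrix (Fin n) (Fin n) ℝ)
    (hu2 : ContDiff ℝ 1 u2)
    (hzcc : ∀ p : ℝ × ℝ, pd2 u1 p - pd1 u2 p + (u1 p * u2 p - u2 p * u1 p) = 0)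
    (hΨ : ContDiff ℝ 2 Ψ)
    (hΨinv : ∀ p : ℝ × ℝ, IsUnit (Ψ p))
    (hlsp1 : ∀ p : ℝ × ℝ, pd1 Ψ p = u1 p * Ψ p)
    (hlsp2 : ∀ p : ℝ × ℝ, pd2 Ψ p = u2 p * Ψ p)
    (s : ℝ → ℝ) (hs : ContDiff ℝ 1 s)
    (Fs : ℝ × ℝ → Matrix (Fin n) (Fin n) ℝ)
    (hFs : Fs = fun p => s p.2 • ((Ψ p)⁻¹ * pd2 Ψ p)) :
    (∀ p : ℝ × ℝ,
      pd1 Fs p = s p.2 • ((Ψ p)⁻¹ * pd2 u1 p * Ψ p)) ∧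
    (∀ p : ℝ × ℝ,
      pd2 Fs p = (Ψ p)⁻¹ * pd2 (fun q => s q.2 • u2 q) p * Ψ p) := by
  have hΨd : Differentiable ℝ Ψ := hΨ.differentiable two_ne_zero
  have hu2d : Differentiable ℝ u2 := hu2.differentiable one_ne_zero
  have hsd : Differentiable ℝ s := hs.differentiable one_ne_zero
  have hA : Differentiable ℝ (fun q : ℝ × ℝ => s q.2 • u2 q) :=
    (hsd.comp differentiable_snd).smul hu2d
  have hFs_conj : Fs = fun q => (Ψ q)⁻¹ * (s q.2 • u2 q) * Ψ q := by
    rw [hFs]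
    funext q
    rw [hlsp2, ← mul_assoc, mul_smul_comm, smul_mul_assoc]
  subst hFs_conj
  refine ⟨fun p => ?_, fun p => ?_⟩
  · have hz : pd2 u1 p = pd1 u2 p + (u2 p * u1 p - u1 p * u2 p) := by
      rw [← sub_eq_zero, ← hzcc p]
      abel
    have hA1 : pd1 (fun q => s q.2 • u2 q) p = s p.2 • pd1 u2 p :=
      fderiv_smul_comp_snd_apply_of_snd_eq_zero (hsd p.2) (hu2d p) rfl
    rw [pd1, fderiv_matrix_conj_apply (hΨd p) (hA p) (hΨinv p) (hlsp1 p), ← pd1, hA1, hz]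
    simp only [smul_mul_assoc, mul_smul_comm, ← smul_sub, ← smul_add]
  · rw [pd2, fderiv_matrix_conj_apply (hΨd p) (hA p) (hΨinv p) (hlsp2 p), ← pd2,
      smul_mul_assoc, mul_smul_comm, sub_self, add_zero]

/-- Sym–Tafel-type surface in the second variable: for `(u¹, u²)` satisfying
the ZCC, `Ψ` solving the LSP, and `s : ℝ → ℝ` continuously differentiable, the surface
`F^s := s(ξ₂)·Ψ⁻¹·(∂₂Ψ)` has partial derivatives `∂₁F^s = s(ξ₂)·Ψ⁻¹·(∂₂u¹)·Ψ` and
`∂₂F^s = Ψ⁻¹·∂₂(s(ξ₂)u²)·Ψ`. -/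
theorem surface_Fs_tangent_vectors {n : ℕ} (hn : 1 ≤ n)
    (u1 u2 Ψ : ℝ × ℝ → Matrix (Fin n) (Fin n) ℝ)
    (hu1 : ContDiff ℝ 1 u1) (hu2 : ContDiff ℝ 1 u2)
    (hzcc : ∀ p : ℝ × ℝ, pd2 u1 p - pd1 u2 p + (u1 p * u2 p - u2 p * u1 p) = 0)
    (hΨ : ContDiff ℝ 2 Ψ)
    (hΨinv : ∀ p : ℝ × ℝ, IsUnit (Ψ p))
    (hlsp1 : ∀ p : ℝ × ℝ, pd1 Ψ p = u1 p * Ψ p)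
    (hlsp2 : ∀ p : ℝ × ℝ, pd2 Ψ p = u2 p * Ψ p)
    (s : ℝ → ℝ) (hs : ContDiff ℝ 1 s)
    (Fs : ℝ × ℝ → Matrix (Fin n) (Fin n) ℝ)
    (hFs : Fs = fun p => s p.2 • ((Ψ p)⁻¹ * pd2 Ψ p)) :
    (∀ p : ℝ × ℝ,
      pd1 Fs p = s p.2 • ((Ψ p)⁻¹ * pd2 u1 p * Ψ p)) ∧
    (∀ p : ℝ × ℝ,
      pd2 Fs p = (Ψ p)⁻¹ * pd2 (fun q => s q.2 • u2 q) p * Ψ p) :=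
  surface_Fs_tangent_vectors_general u1 u2 Ψ hu2 hzcc hΨ hΨinv hlsp1 hlsp2 s hs Fs hFs
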